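/- Let G be a Polish group and H : G → [0,∞] a Baire measurable semi-norm such that for every ε > 0 the set {g : H(g) < ε} is non-meagre. Then H is continuous. -/

import Mathlib

/-! By Pettis' theorem, `A * A⁻¹` is a neighbourhood of `1` for every non-meagre Baire measurable
set `A` in a Baire topological group. Applied to the sublevel sets `{H < ε / 2}`, whose products
`{H < ε / 2} * {H < ε / 2}⁻¹` lie in `{H < ε}` by subadditivity and symmetry of `H`, this makes `H`
continuous at `1`. Continuity everywhere follows from `|H g - H g₀| ≤ H (g * g₀⁻¹)`. -/

open scoped ENNReal

def IsGradedSubgroup {G : Type*} [Group G] (H : G → ℝ≥0∞) : Prop :=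
  H 1 = 0 ∧ (∀ g : G, H g⁻¹ = H g) ∧ ∀ g h : G, H (g * h) ≤ H g + H h

def BaireMeasurableFun {X : Type*} [TopologicalSpace X] (φ : X → ℝ≥0∞) : Prop :=
  ∀ s : Set ℝ≥0∞, MeasurableSet s → BaireMeasurableSet (φ ⁻¹' s)

open scoped Pointwise Topology
open Filter Set

theorem Filter.EventuallyEq.isMeagre_iff {X : Type*} [TopologicalSpace X] {s t : Set X}
    (h : s =ᵇ t) : IsMeagre s ↔ IsMeagre t :=
  congr_sets h.compl.mem_iff

section Pettis

variable {G : Type*} [Group G] [TopologicalSpace G] [IsTopologicalGroup G] [BaireSpace G]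

theorem nonempty_inter_smul_of_residualEq_isOpen {A U : Set G} (hAU : A =ᵇ U) (hU : IsOpen U)
    {g : G} (hg : (U ∩ g • U).Nonempty) : (A ∩ g • A).Nonempty := by
  have hAU' : (g⁻¹ • ·) ⁻¹' A =ᵇ (g⁻¹ • ·) ⁻¹' U :=
    hAU.comp_tendsto (tendsto_residual_of_isOpenMap (continuous_const_smul g⁻¹)
      (Homeomorph.smul g⁻¹).isOpenMap)
  rw [preimage_smul, preimage_smul, inv_inv] at hAU'
  refine nonempty_of_not_isMeagre ?_
  rw [(hAU.inter hAU').isMeagre_iff]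
  exact not_isMeagre_of_isOpen (hU.inter (hU.smul g)) hg

/-- **Pettis' theorem**. -/
theorem BaireMeasurableSet.mul_inv_mem_nhds_one {A : Set G} (hA : BaireMeasurableSet A)
    (hnm : ¬ IsMeagre A) : A * A⁻¹ ∈ 𝓝 (1 : G) := by
  obtain ⟨U, hU, hAU⟩ := hA.residualEq_isOpen
  obtain ⟨x, hx⟩ : U.Nonempty := nonempty_of_not_isMeagre (hAU.isMeagre_iff.not.mp hnm)
  have hV : (· * x) ⁻¹' U ∈ 𝓝 (1 : G) :=
    (hU.preimage (continuous_mul_const x)).mem_nhds (by simpa using hx)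
  filter_upwards [hV] with g hg
  obtain ⟨y, hyA, z, hzA, rfl⟩ :=
    nonempty_inter_smul_of_residualEq_isOpen hAU hU ⟨g * x, hg, x, hx, rfl⟩
  exact ⟨g • z, hyA, z⁻¹, by simpa using hzA, by simp [smul_eq_mul]⟩

end Pettis

namespace IsGradedSubgroup

variable {G : Type*} [Group G] {H : G → ℝ≥0∞}

theorem map_mul_inv_comm (hH : IsGradedSubgroup H) (g g₀ : G) : H (g * g₀⁻¹) = H (g₀ * g⁻¹) := by
  rw [← hH.2.1, mul_inv_rev, inv_inv]

theorem le_map_mul_inv_add (hH : IsGradedSubgroup H) (g g₀ : G) : H g ≤ H (g * g₀⁻¹) + H g₀ := by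
  simpa using hH.2.2 (g * g₀⁻¹) g₀

theorem sublevel_mul_inv_subset (hH : IsGradedSubgroup H) (δ : ℝ≥0∞) :
    {g | H g < δ} * {g | H g < δ}⁻¹ ⊆ {g | H g < δ + δ} := by
  rintro _ ⟨a, ha, b, hb, rfl⟩
  calc H (a * b) ≤ H a + H b := hH.2.2 a b
    _ < δ + δ := ENNReal.add_lt_add ha (by simpa [hH.2.1] using hb)

theorem continuous_of_continuousAt_one [TopologicalSpace G] [ContinuousMul G]
    (hH : IsGradedSubgroup H) (h1 : ContinuousAt H 1) : Continuous H := by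
  refine continuous_iff_continuousAt.mpr fun g₀ ↦ ?_
  have hd : Tendsto (fun g ↦ H (g * g₀⁻¹)) (𝓝 g₀) (𝓝 0) := by
    rw [← hH.1]
    exact h1.tendsto.comp ((continuous_mul_const g₀⁻¹).tendsto' g₀ 1 (mul_inv_cancel g₀))
  have hlower : Tendsto (fun g ↦ H g₀ - H (g * g₀⁻¹)) (𝓝 g₀) (𝓝 (H g₀)) := by
    simpa using ENNReal.Tendsto.sub tendsto_const_nhds hd (.inr ENNReal.zero_ne_top)
  have hupper : Tendsto (fun g ↦ H (g * g₀⁻¹) + H g₀) (𝓝 g₀) (𝓝 (H g₀)) := by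
    simpa using hd.add tendsto_const_nhds
  refine tendsto_of_tendsto_of_tendsto_of_le_of_le hlower hupper (fun g ↦ ?_)
    (fun g ↦ hH.le_map_mul_inv_add g g₀)
  rw [tsub_le_iff_left, hH.map_mul_inv_comm]
  exact hH.le_map_mul_inv_add g₀ g

theorem continuousAt_one_of_baireMeasurableFun [TopologicalSpace G] [IsTopologicalGroup G]
    [BaireSpace G] (hH : IsGradedSubgroup H) (hBM : BaireMeasurableFun H)
    (hnm : ∀ ε : ℝ≥0∞, 0 < ε → ¬ IsMeagre {g : G | H g < ε}) : ContinuousAt H 1 := by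
  rw [ContinuousAt, hH.1, ENNReal.tendsto_nhds_zero]
  intro ε hε
  have hδ : 0 < ε / 2 := ENNReal.half_pos hε.ne'
  have hpettis := (hBM (Iio (ε / 2)) measurableSet_Iio).mul_inv_mem_nhds_one (hnm _ hδ)
  filter_upwards [hpettis] with g hg
  have hsub : H g < ε / 2 + ε / 2 := hH.sublevel_mul_inv_subset (ε / 2) hg
  exact (ENNReal.add_halves ε ▸ hsub).le

end IsGradedSubgroup

/-- A non-meagre Baire measurable semi-norm on a Polish group is continuous. -/
theorem nonmeagre_baireMeasurable_seminorm_continuous {G : Type*} [Group G]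
    [TopologicalSpace G] [IsTopologicalGroup G] [PolishSpace G] (H : G → ℝ≥0∞)
    (hH : IsGradedSubgroup H) (hBM : BaireMeasurableFun H)
    (hnm : ∀ ε : ℝ≥0∞, 0 < ε → ¬ IsMeagre {g : G | H g < ε}) :
    Continuous H :=
  hH.continuous_of_continuousAt_one (hH.continuousAt_one_of_baireMeasurableFun hBM hnm)
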